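/- If N and N′ are fluid bisimulation equivalent RLFTSs, then the union ℛ of all fluid bisimulations between N and N′ is itself a fluid bisimulation between N and N′ (in particular, ℛ is an equivalence relation), and ℛ contains every fluid bisimulation between N and N′; hence ℛ is the largest fluid bisimulation between N and N′. -/
import Mathlib


open scoped BigOperators

/-- A rated labeled fluid transition system (RLFTS) over a type `Act` of actions. -/
structure RLFTS (Act : Type) where
  S : Type
  E : Type
  s0 : S
  src : E → S
  tgt : E → S
  rate : E → ℝ
  label : E → Act
  RP : S → ℝ
  rate_pos : ∀ e, 0 < rate e
  out_finite : ∀ s : S, {e : E | src e = s}.Finite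
  out_nonempty : ∀ s : S, ∃ e : E, src e = s

namespace RLFTS

variable {Act : Type}

/-- Exit rate of a state. -/
noncomputable def RE (N : RLFTS Act) (s : N.S) : ℝ :=
  ∑ᶠ e ∈ {e : N.E | N.src e = s}, N.rate e

/-- Average sojourn time in a state. -/
noncomputable def SJ (N : RLFTS Act) (s : N.S) : ℝ := 1 / N.RE s

/-- Firing probability of an edge. -/
noncomputable def PTe (N : RLFTS Act) (e : N.E) : ℝ := N.rate e / N.RE (N.src e)

/-- `IsPathFrom N M es` : the list of edges `es` is a path starting in the state `M`. -/
def IsPathFrom (N : RLFTS Act) : N.S → List N.E → Prop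
  | _, [] => True
  | M, e :: es => N.src e = M ∧ IsPathFrom N (N.tgt e) es

/-- The list of states visited by a path starting in `M`. -/
def visits (N : RLFTS Act) : N.S → List N.E → List N.S
  | M, [] => [M]
  | M, e :: es => M :: visits N (N.tgt e) es

/-- Execution probability of a path. -/
noncomputable def pathPT (N : RLFTS Act) (es : List N.E) : ℝ := (es.map N.PTe).prod

/-- Cumulative execution probability of the `(σ,ς,ϱ)`-selected paths starting in `M`. -/
noncomputable def PTsel (N : RLFTS Act) (M : N.S) (σ : List Act) (ς ϱ : List ℝ) : ℝ :=
  ∑ᶠ es ∈ {es : List N.E | IsPathFrom N M es ∧ es.map N.label = σ ∧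
      (visits N M es).map N.SJ = ς ∧ (visits N M es).map N.RP = ϱ}, N.pathPT es

end RLFTS

namespace RLFTS

variable {Act : Type}

/-- Source map on the disjoint union of the edges of two RLFTSs. -/
def csrc (N N' : RLFTS Act) : N.E ⊕ N'.E → N.S ⊕ N'.S := Sum.map N.src N'.src

/-- Target map on the disjoint union of the edges of two RLFTSs. -/
def ctgt (N N' : RLFTS Act) : N.E ⊕ N'.E → N.S ⊕ N'.S := Sum.map N.tgt N'.tgt

/-- Rate function on the disjoint union of the edges of two RLFTSs. -/
def crate (N N' : RLFTS Act) : N.E ⊕ N'.E → ℝ := Sum.elim N.rate N'.rate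

/-- Labeling on the disjoint union of the edges of two RLFTSs. -/
def clabel (N N' : RLFTS Act) : N.E ⊕ N'.E → Act := Sum.elim N.label N'.label

/-- Fluid-rate function on the disjoint union of the states of two RLFTSs. -/
def cRP (N N' : RLFTS Act) : N.S ⊕ N'.S → ℝ := Sum.elim N.RP N'.RP

/-- Overall rate to move from the state `s` into the set of states `H` by action `a`,
in the disjoint union of two RLFTSs. -/
noncomputable def RMa (N N' : RLFTS Act) (a : Act) (s : N.S ⊕ N'.S)
    (H : Set (N.S ⊕ N'.S)) : ℝ :=
  ∑ᶠ e ∈ {e : N.E ⊕ N'.E | csrc N N' e = s ∧ clabel N N' e = a ∧ ctgt N N' e ∈ H},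
    crate N N' e

/-- `R` is a fluid bisimulation between the RLFTSs `N` and `N'`. -/
def FluidBisim (N N' : RLFTS Act) (R : (N.S ⊕ N'.S) → (N.S ⊕ N'.S) → Prop) : Prop :=
  Equivalence R ∧ R (Sum.inl N.s0) (Sum.inr N'.s0) ∧
    ∀ s1 s2, R s1 s2 → cRP N N' s1 = cRP N N' s2 ∧
      ∀ (a : Act) (s : N.S ⊕ N'.S), RMa N N' a s1 {v | R s v} = RMa N N' a s2 {v | R s v}

/-- The RLFTSs `N` and `N'` are fluid bisimulation equivalent. -/
def FluidBisimEquiv (N N' : RLFTS Act) : Prop := ∃ R, FluidBisim N N' R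

end RLFTS

namespace RLFTS

variable {Act : Type}

lemma csrc_fiber_finite (N N' : RLFTS Act) (s : N.S ⊕ N'.S) :
    {e : N.E ⊕ N'.E | csrc N N' e = s}.Finite := by
  cases s with
  | inl x =>
    refine ((N.out_finite x).image Sum.inl).subset ?_
    rintro (e | e) he
    · simp only [csrc, Set.mem_setOf_eq, Sum.map_inl, Sum.inl.injEq] at he
      exact ⟨e, he, rfl⟩
    · simp only [csrc, Set.mem_setOf_eq, Sum.map_inr] at he
      exact (Sum.inr_ne_inl he).elim
  | inr x =>
    refine ((N'.out_finite x).image Sum.inr).subset ?_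
    rintro (e | e) he
    · simp only [csrc, Set.mem_setOf_eq, Sum.map_inl] at he
      exact (Sum.inl_ne_inr he).elim
    · simp only [csrc, Set.mem_setOf_eq, Sum.map_inr, Sum.inr.injEq] at he
      exact ⟨e, he, rfl⟩

set_option maxHeartbeats 1000000 in
lemma closed_RMa {N N' : RLFTS Act} {R1 : (N.S ⊕ N'.S) → (N.S ⊕ N'.S) → Prop}
    (hR1 : FluidBisim N N' R1) {s1 s2 : N.S ⊕ N'.S} (h12 : R1 s1 s2)
    {H : Set (N.S ⊕ N'.S)} (hH : ∀ u v, u ∈ H → R1 u v → v ∈ H) (a : Act) :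
    RMa N N' a s1 H = RMa N N' a s2 H := by
  classical
  set st : Setoid (N.S ⊕ N'.S) := ⟨R1, hR1.1⟩ with hst
  have hfin : ∀ (s : N.S ⊕ N'.S) (K : Set (N.S ⊕ N'.S)),
      {e : N.E ⊕ N'.E | csrc N N' e = s ∧ clabel N N' e = a ∧ ctgt N N' e ∈ K}.Finite :=
    fun s K => (csrc_fiber_finite N N' s).subset (fun e he => he.1)
  have hRMeq : ∀ (s : N.S ⊕ N'.S) (K : Set (N.S ⊕ N'.S)),
      RMa N N' a s K = ∑ e ∈ (hfin s K).toFinset, crate N N' e := by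
    intro s K
    show ∑ᶠ e ∈ _, crate N N' e = _
    conv_lhs => rw [← (hfin s K).coe_toFinset]
    exact finsum_mem_coe_finset _ _
  set T1 := (hfin s1 H).toFinset with hT1
  set T2 := (hfin s2 H).toFinset with hT2
  set Q : Finset (Quotient st) := (T1 ∪ T2).image (fun e => Quotient.mk st (ctgt N N' e)) with hQ
  have key : ∀ q ∈ Q,
      (∑ e ∈ T1.filter (fun e => Quotient.mk st (ctgt N N' e) = q), crate N N' e)
      = ∑ e ∈ T2.filter (fun e => Quotient.mk st (ctgt N N' e) = q), crate N N' e := by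
    intro q hq
    obtain ⟨e0, he0, hq0⟩ := Finset.mem_image.mp hq
    have htgt0 : ctgt N N' e0 ∈ H := by
      rcases Finset.mem_union.mp he0 with h' | h'
      · exact ((hfin s1 H).mem_toFinset.mp h').2.2
      · exact ((hfin s2 H).mem_toFinset.mp h').2.2
    set t := Quotient.out q with ht
    have htq : Quotient.mk st t = q := Quotient.out_eq q
    have hR0t : R1 (ctgt N N' e0) t := Quotient.exact (hq0.trans htq.symm)
    have htH : t ∈ H := hH _ _ htgt0 hR0t
    have hclass : ∀ v, Quotient.mk st v = q ↔ R1 t v := by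
      intro v
      constructor
      · intro hv; exact hR1.1.symm (Quotient.exact (hv.trans htq.symm))
      · intro hv; exact (Quotient.sound (hR1.1.symm hv)).trans htq
    have hfilt : ∀ (s : N.S ⊕ N'.S),
        ((hfin s H).toFinset.filter (fun e => Quotient.mk st (ctgt N N' e) = q))
        = (hfin s {v | R1 t v}).toFinset := by
      intro s
      ext e
      simp only [Finset.mem_filter, Set.Finite.mem_toFinset, Set.mem_setOf_eq]
      constructor
      · rintro ⟨⟨h1, h2, h3⟩, h4⟩
        exact ⟨h1, h2, (hclass _).mp h4⟩
      · rintro ⟨h1, h2, h3⟩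
        exact ⟨⟨h1, h2, hH _ _ htH h3⟩, (hclass _).mpr h3⟩
    have hmain := (hR1.2.2 s1 s2 h12).2 a t
    calc (∑ e ∈ T1.filter (fun e => Quotient.mk st (ctgt N N' e) = q), crate N N' e)
        = RMa N N' a s1 {v | R1 t v} := by rw [hT1, hfilt s1, hRMeq s1]
      _ = RMa N N' a s2 {v | R1 t v} := hmain
      _ = ∑ e ∈ T2.filter (fun e => Quotient.mk st (ctgt N N' e) = q), crate N N' e := by
          rw [hT2, hfilt s2, hRMeq s2]
  have hmaps1 : ∀ e ∈ T1, (Quotient.mk st (ctgt N N' e)) ∈ Q :=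
    fun e he => Finset.mem_image.mpr ⟨e, Finset.mem_union_left _ he, rfl⟩
  have hmaps2 : ∀ e ∈ T2, (Quotient.mk st (ctgt N N' e)) ∈ Q :=
    fun e he => Finset.mem_image.mpr ⟨e, Finset.mem_union_right _ he, rfl⟩
  calc RMa N N' a s1 H = ∑ e ∈ T1, crate N N' e := hRMeq s1 H
    _ = ∑ q ∈ Q, ∑ e ∈ T1.filter (fun e => Quotient.mk st (ctgt N N' e) = q), crate N N' e :=
        (Finset.sum_fiberwise_of_maps_to hmaps1 _).symm
    _ = ∑ q ∈ Q, ∑ e ∈ T2.filter (fun e => Quotient.mk st (ctgt N N' e) = q), crate N N' e :=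
        Finset.sum_congr rfl key
    _ = ∑ e ∈ T2, crate N N' e := Finset.sum_fiberwise_of_maps_to hmaps2 _
    _ = RMa N N' a s2 H := (hRMeq s2 H).symm

lemma join_bisim {N N' : RLFTS Act} {R1 R2 : (N.S ⊕ N'.S) → (N.S ⊕ N'.S) → Prop}
    (h1 : FluidBisim N N' R1) (h2 : FluidBisim N N' R2) :
    FluidBisim N N' (Relation.EqvGen (fun a b => R1 a b ∨ R2 a b)) := by
  set R := Relation.EqvGen (fun a b => R1 a b ∨ R2 a b) with hRdef
  have hEq : Equivalence R := Relation.EqvGen.is_equivalence _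
  refine ⟨hEq, Relation.EqvGen.rel _ _ (Or.inl h1.2.1), ?_⟩
  have hcl1 : ∀ s, ∀ u v, u ∈ {v | R s v} → R1 u v → v ∈ {v | R s v} :=
    fun s u v hu huv => hEq.trans hu (Relation.EqvGen.rel _ _ (Or.inl huv))
  have hcl2 : ∀ s, ∀ u v, u ∈ {v | R s v} → R2 u v → v ∈ {v | R s v} :=
    fun s u v hu huv => hEq.trans hu (Relation.EqvGen.rel _ _ (Or.inr huv))
  intro s1 s2 h12
  induction h12 with
  | rel x y hxy =>
    rcases hxy with hx | hx
    · exact ⟨(h1.2.2 x y hx).1, fun a s => closed_RMa h1 hx (hcl1 s) a⟩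
    · exact ⟨(h2.2.2 x y hx).1, fun a s => closed_RMa h2 hx (hcl2 s) a⟩
  | refl x => exact ⟨rfl, fun a s => rfl⟩
  | symm x y _ ih => exact ⟨ih.1.symm, fun a s => (ih.2 a s).symm⟩
  | trans x y z _ _ ih1 ih2 =>
      exact ⟨ih1.1.trans ih2.1, fun a s => (ih1.2 a s).trans (ih2.2 a s)⟩

end RLFTS

/-- If `N ↔fl N'`, then the union of all fluid bisimulations between `N` and `N'` is itself a
fluid bisimulation between `N` and `N'` (in particular an equivalence relation), and it contains
every fluid bisimulation between `N` and `N'`; hence it is the largest fluid bisimulation. -/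
theorem RLFTS.union_fluidBisim_largest {Act : Type} (N N' : RLFTS Act)
    (h : RLFTS.FluidBisimEquiv N N') :
    RLFTS.FluidBisim N N' (fun s1 s2 => ∃ R, RLFTS.FluidBisim N N' R ∧ R s1 s2) ∧
      ∀ R, RLFTS.FluidBisim N N' R →
        ∀ s1 s2, R s1 s2 → ∃ R', RLFTS.FluidBisim N N' R' ∧ R' s1 s2 := by
  obtain ⟨R0, hR0⟩ := h
  refine ⟨⟨?_, ⟨R0, hR0, hR0.2.1⟩, ?_⟩, fun R hR s1 s2 h12 => ⟨R, hR, h12⟩⟩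
  · constructor
    · intro x; exact ⟨R0, hR0, hR0.1.refl x⟩
    · rintro x y ⟨R, hR, hxy⟩; exact ⟨R, hR, hR.1.symm hxy⟩
    · rintro x y z ⟨Ra, hRa, hxy⟩ ⟨Rb, hRb, hyz⟩
      exact ⟨_, RLFTS.join_bisim hRa hRb,
        (Relation.EqvGen.is_equivalence _).trans (Relation.EqvGen.rel _ _ (Or.inl hxy))
          (Relation.EqvGen.rel _ _ (Or.inr hyz))⟩
  · rintro s1 s2 ⟨R1, hR1, h12⟩
    refine ⟨(hR1.2.2 _ _ h12).1, fun a s => ?_⟩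
    apply RLFTS.closed_RMa hR1 h12
    rintro u v ⟨Ru, hRu, hsu⟩ huv
    exact ⟨_, RLFTS.join_bisim hRu hR1,
      (Relation.EqvGen.is_equivalence _).trans (Relation.EqvGen.rel _ _ (Or.inl hsu))
        (Relation.EqvGen.rel _ _ (Or.inr huv))⟩
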